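/- For W(r,x) defined by W = (√r (4-r²)^{3/2}/(2(4+r²)))·(2rV(r,x) - (4-r²)V_r(r,x)), where V is C³ on (0,2)×ℝ, and for the operator L(W) = W_{ξξ} + W_{xx} - P(ξ)W expressed in the r-variable via ξ = log((2+r)/(2-r)), one has the identity -32(4+r²)²/(√r(4-r²)^{5/2}) · L(W) = ∂_r E(V) - (16r/(16-r⁴)) E(V), where E(V) = (r²+4)[(4-r²)²V_{rr} + 16V_{xx}] - (5r⁴+48r²-16)(4-r²)V_r/r + 4(r⁴+16r²-16)V. -/

import Mathlib

noncomputable def P (ξ : ℝ) : ℝ :=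
  (Real.exp (4 * ξ) + 10 * Real.exp (2 * ξ) + 1) / (4 * (Real.exp (2 * ξ) - 1) ^ 2)

/-- The operator `E(V)`. -/
noncomputable def EOp (V : ℝ → ℝ → ℝ) (r x : ℝ) : ℝ :=
  (r ^ 2 + 4) * ((4 - r ^ 2) ^ 2 * deriv (deriv (fun s => V s x)) r +
      16 * deriv (deriv (fun t => V r t)) x) -
  (5 * r ^ 4 + 48 * r ^ 2 - 16) * (4 - r ^ 2) * (deriv (fun s => V s x) r) / r +
  4 * (r ^ 4 + 16 * r ^ 2 - 16) * V r x

/-- `W = (√r (4-r²)^{3/2}/(2(4+r²)))·(2rV - (4-r²)V_r)`. -/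
noncomputable def Wof (V : ℝ → ℝ → ℝ) (r x : ℝ) : ℝ :=
  (Real.sqrt r * (4 - r ^ 2) ^ ((3 : ℝ) / 2) / (2 * (4 + r ^ 2))) *
    (2 * r * V r x - (4 - r ^ 2) * deriv (fun s => V s x) r)

/-- `L(W) = W_{ξξ} + W_{xx} - P(ξ)W` written in the `r`-variable via
`ξ = log((2+r)/(2-r))`, so `W_{ξξ} = ((4-r²)/4)∂_r(((4-r²)/4)∂_r W)`. -/
noncomputable def LOp (W : ℝ → ℝ → ℝ) (r x : ℝ) : ℝ :=
  ((4 - r ^ 2) / 4) * deriv (fun s => ((4 - s ^ 2) / 4) * deriv (fun u => W u x) s) r +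
    deriv (deriv (fun t => W r t)) x - P (Real.log ((2 + r) / (2 - r))) * W r x

/-!
Write `W = ω · B V` with `ω = weight = √r (4-r²)^{3/2} / (2(4+r²))` and
`B V = wBracket V = 2rV - (4-r²)V_r`. In the `r`-variable `∂_ξ = ((4-r²)/4) ∂_r` (`xiDeriv`),
and `∂_ξ ω = σ ω` with the rational function `σ = weightLogDeriv = 1/(2r) - 3r/8 - 4r/(4+r²)`,
so conjugation by `ω` gives `∂_ξ² (ω h) = ω (∂_ξ + σ)² h`. Since `∂_x` commutes with `∂_r` for
`V ∈ C³`, also `W_xx = ω · B (V_xx)`, and `P(ξ) = (3r⁴ - 8r² + 48)/(64r²)`. After dividing by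
`ω`, both sides of the identity are therefore rational in `r` and linear in
`V, V_r, V_rr, V_rrr, V_xx, ∂_r V_xx`, and they agree after clearing denominators.
-/
open Set Topology

section Partials

variable {F : ℝ × ℝ → ℝ}

lemma deriv_comp_prodMk_left_eq {s t : ℝ} (hF : DifferentiableAt ℝ F (s, t)) :
    deriv (fun s => F (s, t)) s = fderiv ℝ F (s, t) (1, 0) :=
  (hF.hasFDerivAt.comp_hasDerivAt s ((hasDerivAt_id s).prodMk (hasDerivAt_const s t))).deriv

lemma deriv_comp_prodMk_right_eq {s t : ℝ} (hF : DifferentiableAt ℝ F (s, t)) :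
    deriv (fun t => F (s, t)) t = fderiv ℝ F (s, t) (0, 1) :=
  (hF.hasFDerivAt.comp_hasDerivAt t ((hasDerivAt_const t s).prodMk (hasDerivAt_id t))).deriv

lemma contDiff_deriv_fst {m n : WithTop ℕ∞} (hF : ContDiff ℝ n F) (hmn : m + 1 ≤ n) :
    ContDiff ℝ m fun p : ℝ × ℝ => deriv (fun s => F (s, p.2)) p.1 := by
  have hF₁ := (hF.of_le (le_add_self.trans hmn)).differentiable one_ne_zero
  rw [funext fun p : ℝ × ℝ => deriv_comp_prodMk_left_eq (hF₁ p)]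
  exact (hF.fderiv_right hmn).clm_apply contDiff_const

lemma contDiff_deriv_snd {m n : WithTop ℕ∞} (hF : ContDiff ℝ n F) (hmn : m + 1 ≤ n) :
    ContDiff ℝ m fun p : ℝ × ℝ => deriv (fun t => F (p.1, t)) p.2 := by
  have hF₁ := (hF.of_le (le_add_self.trans hmn)).differentiable one_ne_zero
  rw [funext fun p : ℝ × ℝ => deriv_comp_prodMk_right_eq (hF₁ p)]
  exact (hF.fderiv_right hmn).clm_apply contDiff_const

lemma fderiv_fderiv_apply_eq {v : ℝ × ℝ} (hF : ContDiff ℝ 2 F) (p w : ℝ × ℝ) :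
    fderiv ℝ (fun q => fderiv ℝ F q v) p w = fderiv ℝ (fderiv ℝ F) p w v := by
  have hd : DifferentiableAt ℝ (fderiv ℝ F) p :=
    (hF.fderiv_right (m := 1) le_rfl).differentiable one_ne_zero p
  rw [fderiv_clm_apply hd (differentiableAt_const v)]
  simp

lemma deriv_deriv_comm (hF : ContDiff ℝ 2 F) (r x : ℝ) :
    deriv (fun t => deriv (fun s => F (s, t)) r) x =
      deriv (fun s => deriv (fun t => F (s, t)) x) r := by
  have hF₁ := hF.differentiable two_ne_zero
  have hF₂ := (hF.fderiv_right (m := 1) le_rfl).differentiable one_ne_zero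
  simp only [fun t => deriv_comp_prodMk_left_eq (hF₁ (r, t)),
    fun s => deriv_comp_prodMk_right_eq (hF₁ (s, x))]
  rw [deriv_comp_prodMk_right_eq (F := fun p => fderiv ℝ F p (1, 0))
      ((hF₂ _).clm_apply (differentiableAt_const _)),
    deriv_comp_prodMk_left_eq (F := fun p => fderiv ℝ F p (0, 1))
      ((hF₂ _).clm_apply (differentiableAt_const _)),
    fderiv_fderiv_apply_eq hF, fderiv_fderiv_apply_eq hF,
    (hF.contDiffAt.isSymmSndFDerivAt (by simp)).eq]

lemma deriv_deriv_deriv_comm (hF : ContDiff ℝ 3 F) (r x : ℝ) :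
    deriv (deriv fun t => deriv (fun s => F (s, t)) r) x =
      deriv (fun s => deriv (deriv fun t => F (s, t)) x) r := by
  rw [funext (deriv_deriv_comm (hF.of_le (by norm_num)) r)]
  exact deriv_deriv_comm (F := fun p => deriv (fun t => F (p.1, t)) p.2)
    (contDiff_deriv_snd hF (by norm_num)) r x

end Partials

lemma deriv_deriv_const_mul_sub {φ ψ : ℝ → ℝ} (hφ : ContDiff ℝ 2 φ) (hψ : ContDiff ℝ 2 ψ)
    (a b x : ℝ) :
    deriv (deriv fun t => a * φ t - b * ψ t) x = a * deriv (deriv φ) x - b * deriv (deriv ψ) x := by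
  have hφ₁ := hφ.differentiable two_ne_zero
  have hψ₁ := hψ.differentiable two_ne_zero
  have hφ₂ := hφ.deriv'.differentiable one_ne_zero
  have hψ₂ := hψ.deriv'.differentiable one_ne_zero
  have hderiv : deriv (fun t => a * φ t - b * ψ t) = fun t => a * deriv φ t - b * deriv ψ t :=
    funext fun t => (((hφ₁ t).hasDerivAt.const_mul a).sub ((hψ₁ t).hasDerivAt.const_mul b)).deriv
  rw [hderiv]
  exact (((hφ₂ x).hasDerivAt.const_mul a).sub ((hψ₂ x).hasDerivAt.const_mul b)).deriv

noncomputable def weight (r : ℝ) : ℝ :=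
  √r * (4 - r ^ 2) ^ ((3 : ℝ) / 2) / (2 * (4 + r ^ 2))

noncomputable def wBracket (f : ℝ → ℝ) (r : ℝ) : ℝ :=
  2 * r * f r - (4 - r ^ 2) * deriv f r

lemma deriv_deriv_Wof (V : ℝ → ℝ → ℝ) (hV : ContDiff ℝ 3 fun p : ℝ × ℝ => V p.1 p.2) (r x : ℝ) :
    deriv (deriv fun t => Wof V r t) x =
      weight r * wBracket (fun s => deriv (deriv fun t => V s t) x) r := by
  have hφ : ContDiff ℝ 2 fun t => V r t :=
    (hV.comp (contDiff_const.prodMk contDiff_id)).of_le (by norm_num)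
  have hψ : ContDiff ℝ 2 fun t => deriv (fun s => V s t) r :=
    (contDiff_deriv_fst hV (by norm_num)).comp (contDiff_const.prodMk contDiff_id)
  simp only [Wof, deriv_const_mul_field']
  rw [deriv_deriv_const_mul_sub hφ hψ, deriv_deriv_deriv_comm hV]
  rfl

noncomputable def weightLogDeriv (r : ℝ) : ℝ :=
  1 / (2 * r) - 3 * r / 8 - 4 * r / (4 + r ^ 2)

noncomputable def xiDeriv (h : ℝ → ℝ) (r : ℝ) : ℝ :=
  (4 - r ^ 2) / 4 * deriv h r

lemma sub_sq_pos_of_mem_Ioo {r : ℝ} (hr : r ∈ Ioo (0 : ℝ) 2) : 0 < 4 - r ^ 2 := by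
  nlinarith [hr.1, hr.2]

lemma hasDerivAt_weight {r : ℝ} (hr : r ∈ Ioo (0 : ℝ) 2) :
    HasDerivAt weight (4 / (4 - r ^ 2) * weightLogDeriv r * weight r) r := by
  have h4 := sub_sq_pos_of_mem_Ioo hr
  have hr0 : r ≠ 0 := hr.1.ne'
  have hsqrt : √r ≠ 0 := (Real.sqrt_pos.2 hr.1).ne'
  refine (((Real.hasDerivAt_sqrt hr0).mul
    (((hasDerivAt_pow 2 r).const_sub 4).rpow_const (p := 3 / 2) (Or.inl h4.ne'))).div
    (((hasDerivAt_pow 2 r).const_add 4).const_mul 2) (by positivity)).congr_deriv ?_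
  rw [Real.rpow_sub_one h4.ne']
  simp only [weight, weightLogDeriv, Pi.mul_apply]
  field_simp
  rw [Real.sq_sqrt hr.1.le]
  field_simp
  ring

lemma hasDerivAt_weightLogDeriv {r : ℝ} (hr : r ≠ 0) :
    HasDerivAt weightLogDeriv (-1 / (2 * r ^ 2) - 3 / 8 - 4 * (4 - r ^ 2) / (4 + r ^ 2) ^ 2) r := by
  refine ((((hasDerivAt_const r (1 : ℝ)).div ((hasDerivAt_id' r).const_mul 2) (by simpa)).sub
    (((hasDerivAt_id' r).const_mul 3).div_const 8)).sub
    (((hasDerivAt_id' r).const_mul 4).div ((hasDerivAt_pow 2 r).const_add 4)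
      (by positivity))).congr_deriv ?_
  field_simp
  ring

lemma xiDeriv_weight_mul {h : ℝ → ℝ} {r : ℝ} (hr : r ∈ Ioo (0 : ℝ) 2)
    (hh : DifferentiableAt ℝ h r) :
    xiDeriv (fun u => weight u * h u) r = weight r * (xiDeriv h r + weightLogDeriv r * h r) := by
  have h4 := sub_sq_pos_of_mem_Ioo hr
  rw [xiDeriv, xiDeriv, ((hasDerivAt_weight hr).fun_mul hh.hasDerivAt).deriv]
  field_simp
  ring

lemma xiDeriv_xiDeriv_weight_mul {h : ℝ → ℝ} {r : ℝ} (hr : r ∈ Ioo (0 : ℝ) 2)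
    (hh : Differentiable ℝ h) (hh' : DifferentiableAt ℝ (deriv h) r) :
    xiDeriv (xiDeriv fun u => weight u * h u) r =
      weight r * ((4 - r ^ 2) / 4 * ((4 - r ^ 2) / 4 * deriv (deriv h) r - r / 2 * deriv h r) +
        2 * weightLogDeriv r * ((4 - r ^ 2) / 4 * deriv h r) +
        ((4 - r ^ 2) / 4 * deriv weightLogDeriv r + weightLogDeriv r ^ 2) * h r) := by
  set H := fun s => xiDeriv h s + weightLogDeriv s * h s
  have hH : HasDerivAt H ((4 - r ^ 2) / 4 * deriv (deriv h) r - r / 2 * deriv h r +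
      (deriv weightLogDeriv r * h r + weightLogDeriv r * deriv h r)) r := by
    refine ((((hasDerivAt_pow 2 r).const_sub 4).div_const 4).mul hh'.hasDerivAt).add
      ((hasDerivAt_weightLogDeriv hr.1.ne').differentiableAt.hasDerivAt.mul
        (hh r).hasDerivAt) |>.congr_deriv ?_
    ring
  have hxi : xiDeriv (fun u => weight u * h u) =ᶠ[𝓝 r] fun s => weight s * H s := by
    filter_upwards [Ioo_mem_nhds hr.1 hr.2] with s hs using xiDeriv_weight_mul hs (hh s)
  calc xiDeriv (xiDeriv fun u => weight u * h u) r
      = xiDeriv (fun s => weight s * H s) r := by rw [xiDeriv, xiDeriv, hxi.deriv_eq]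
    _ = _ := by
      rw [xiDeriv_weight_mul hr hH.differentiableAt, xiDeriv, hH.deriv]
      simp only [H, xiDeriv]
      ring

lemma hasDerivAt_wBracket {f : ℝ → ℝ} {s : ℝ} (hf : DifferentiableAt ℝ f s)
    (hf' : DifferentiableAt ℝ (deriv f) s) :
    HasDerivAt (wBracket f) (2 * f s + 4 * s * deriv f s - (4 - s ^ 2) * deriv (deriv f) s) s := by
  refine ((((hasDerivAt_id' s).const_mul 2).mul hf.hasDerivAt).sub
    (((hasDerivAt_pow 2 s).const_sub 4).mul hf'.hasDerivAt)).congr_deriv ?_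
  ring

lemma deriv_wBracket {f : ℝ → ℝ} (hf : Differentiable ℝ f) (hf' : Differentiable ℝ (deriv f)) :
    deriv (wBracket f) = fun s => 2 * f s + 4 * s * deriv f s - (4 - s ^ 2) * deriv (deriv f) s :=
  funext fun s => (hasDerivAt_wBracket (hf s) (hf' s)).deriv

lemma hasDerivAt_deriv_wBracket {f : ℝ → ℝ} {r : ℝ} (hf : Differentiable ℝ f)
    (hf' : Differentiable ℝ (deriv f)) (hf'' : DifferentiableAt ℝ (deriv (deriv f)) r) :
    HasDerivAt (deriv (wBracket f))
      (6 * deriv f r + 6 * r * deriv (deriv f) r - (4 - r ^ 2) * deriv (deriv (deriv f)) r) r := by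
  rw [deriv_wBracket hf hf']
  refine ((((hf r).hasDerivAt.const_mul 2).add
    (((hasDerivAt_id' r).const_mul 4).mul (hf' r).hasDerivAt)).sub
    (((hasDerivAt_pow 2 r).const_sub 4).mul hf''.hasDerivAt)).congr_deriv ?_
  ring

/-- `E(V)(·, x)` for `f = V(·, x)` and `g = V_xx(·, x)`. -/
noncomputable def eOp (f g : ℝ → ℝ) (r : ℝ) : ℝ :=
  (r ^ 2 + 4) * ((4 - r ^ 2) ^ 2 * deriv (deriv f) r + 16 * g r) -
  (5 * r ^ 4 + 48 * r ^ 2 - 16) * (4 - r ^ 2) * deriv f r / r +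
  4 * (r ^ 4 + 16 * r ^ 2 - 16) * f r

lemma hasDerivAt_eOp {f g : ℝ → ℝ} {r : ℝ} (hr : r ≠ 0) (hf : DifferentiableAt ℝ f r)
    (hf' : DifferentiableAt ℝ (deriv f) r) (hf'' : DifferentiableAt ℝ (deriv (deriv f)) r)
    (hg : DifferentiableAt ℝ g r) :
    HasDerivAt (eOp f g)
      (((128 * r ^ 3 + 16 * r ^ 5) * f r +
        (-64 - 272 * r ^ 2 + 148 * r ^ 4 + 29 * r ^ 6) * deriv f r +
        (64 * r - 240 * r ^ 3 + 12 * r ^ 5 + 11 * r ^ 7) * deriv (deriv f) r +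
        r ^ 2 * (r ^ 2 + 4) * (4 - r ^ 2) ^ 2 * deriv (deriv (deriv f)) r +
        32 * r ^ 3 * g r + 16 * r ^ 2 * (r ^ 2 + 4) * deriv g r) / r ^ 2) r := by
  have h4 := (hasDerivAt_pow 2 r).const_sub 4
  refine (((((hasDerivAt_pow 2 r).add_const 4).mul (((h4.pow 2).mul hf''.hasDerivAt).add
    (hg.hasDerivAt.const_mul 16))).sub
    (((((((hasDerivAt_pow 4 r).const_mul 5).add ((hasDerivAt_pow 2 r).const_mul 48)).sub_const
      16).mul h4).mul hf'.hasDerivAt).div (hasDerivAt_id' r) hr)).add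
    ((((hasDerivAt_pow 4 r).add ((hasDerivAt_pow 2 r).const_mul 16)).sub_const 16).const_mul
      4 |>.mul hf.hasDerivAt)).congr_deriv ?_
  simp only [Pi.mul_apply, Pi.add_apply, Pi.pow_apply]
  field_simp
  ring

lemma P_log_div {r : ℝ} (hr : r ∈ Ioo (0 : ℝ) 2) :
    P (Real.log ((2 + r) / (2 - r))) = (3 * r ^ 4 - 8 * r ^ 2 + 48) / (64 * r ^ 2) := by
  have h2 : 0 < 2 - r := by linarith [hr.2]
  have hq : 0 < (2 + r) / (2 - r) := div_pos (by linarith [hr.1]) h2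
  have hexp (c : ℝ) : Real.exp (c * Real.log ((2 + r) / (2 - r))) = ((2 + r) / (2 - r)) ^ c := by
    rw [mul_comm, Real.rpow_def_of_pos hq]
  have hne : ((2 + r) / (2 - r)) ^ 2 - 1 ≠ 0 := by
    rw [div_pow, div_sub_one (by positivity)]
    exact div_ne_zero (by nlinarith [hr.1]) (by positivity)
  rw [P, hexp, hexp, Real.rpow_ofNat, Real.rpow_ofNat]
  field_simp
  ring

lemma sqrt_mul_rpow_five_halves_eq {r : ℝ} (hr : r ∈ Ioo (0 : ℝ) 2) :
    √r * (4 - r ^ 2) ^ ((5 : ℝ) / 2) = 2 * (4 + r ^ 2) * (4 - r ^ 2) * weight r := by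
  rw [weight, show (5 : ℝ) / 2 = 1 + 3 / 2 by norm_num,
    Real.rpow_add (sub_sq_pos_of_mem_Ioo hr), Real.rpow_one]
  field_simp

lemma weight_pos {r : ℝ} (hr : r ∈ Ioo (0 : ℝ) 2) : 0 < weight r := by
  have h4 := sub_sq_pos_of_mem_Ioo hr
  have hr0 := hr.1
  unfold weight
  positivity

theorem scaled_L_eq_deriv_eOp_sub {f g : ℝ → ℝ} {r : ℝ} (hf : ContDiff ℝ 3 f)
    (hg : DifferentiableAt ℝ g r) (hr : r ∈ Ioo (0 : ℝ) 2) :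
    -32 * (4 + r ^ 2) ^ 2 / (√r * (4 - r ^ 2) ^ ((5 : ℝ) / 2)) *
        (xiDeriv (xiDeriv fun u => weight u * wBracket f u) r + weight r * wBracket g r -
          P (Real.log ((2 + r) / (2 - r))) * (weight r * wBracket f r)) =
      deriv (eOp f g) r - 16 * r / (16 - r ^ 4) * eOp f g r := by
  have hf₁ : Differentiable ℝ f := hf.differentiable (by norm_num)
  have hf' : ContDiff ℝ 2 (deriv f) := hf.deriv'
  have hf₂ : Differentiable ℝ (deriv f) := hf'.differentiable two_ne_zero
  have hf₃ : Differentiable ℝ (deriv (deriv f)) := hf'.deriv'.differentiable one_ne_zero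
  have hB'' := hasDerivAt_deriv_wBracket hf₁ hf₂ (hf₃ r)
  rw [xiDeriv_xiDeriv_weight_mul hr
      (fun s => (hasDerivAt_wBracket (hf₁ s) (hf₂ s)).differentiableAt) hB''.differentiableAt,
    hB''.deriv, deriv_wBracket hf₁ hf₂,
    (hasDerivAt_weightLogDeriv hr.1.ne').deriv, P_log_div hr,
    (hasDerivAt_eOp hr.1.ne' (hf₁ r) (hf₂ r) (hf₃ r) hg).deriv, sqrt_mul_rpow_five_halves_eq hr]
  have hr0 := hr.1.ne'
  have h4 := sub_sq_pos_of_mem_Ioo hr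
  have h16 : 16 - r ^ 4 ≠ 0 := by
    rw [show 16 - r ^ 4 = (4 - r ^ 2) * (4 + r ^ 2) by ring]; positivity
  have hw := weight_pos hr
  simp only [wBracket, eOp, weightLogDeriv]
  field_simp
  ring

/-- For `V` of class `C³` one has
`-32(4+r²)²/(√r (4-r²)^{5/2}) · L(W) = ∂_r E(V) - (16r/(16-r⁴)) E(V)` on `(0,2) × ℝ`. -/
theorem LW_equals_derivative_of_EV (V : ℝ → ℝ → ℝ)
    (hV : ContDiff ℝ 3 (fun p : ℝ × ℝ => V p.1 p.2)) :
    ∀ r ∈ Set.Ioo (0 : ℝ) 2, ∀ x : ℝ,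
      (-32 * (4 + r ^ 2) ^ 2 / (Real.sqrt r * (4 - r ^ 2) ^ ((5 : ℝ) / 2))) *
          LOp (Wof V) r x =
        deriv (fun s => EOp V s x) r - (16 * r / (16 - r ^ 4)) * EOp V r x := by
  intro r hr x
  have hf : ContDiff ℝ 3 fun s => V s x := hV.comp (contDiff_id.prodMk contDiff_const)
  have hg : DifferentiableAt ℝ (fun s => deriv (deriv fun t => V s t) x) r :=
    ((contDiff_deriv_snd (contDiff_deriv_snd hV (by norm_num)) le_rfl).comp
      (contDiff_id.prodMk contDiff_const)).differentiable one_ne_zero r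
  rw [LOp, deriv_deriv_Wof V hV]
  exact scaled_L_eq_deriv_eOp_sub hf hg hr
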